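/- For all a > 0 and η > 0: (√(2π)/a)·√(1 − e^{−a²η²/2}) ≤ ∫_{|x|<η} e^{−a²x²/2} dx ≤ (√(2π)/a)·√(1 − e^{−a²η²}), and ∫_{|x|>η} e^{−a²x²/2} dx ≤ (√(2π)/a)·e^{−a²η²/2}. -/

import Mathlib

/-!
Squaring turns the integral over `S` into the integral of `exp (-a²(x² + y²)/2)` over `S × S`.
The square `|x|, |y| < η` lies between the discs of radii `η` and `√2 η`, and the region
`|x|, |y| > η` lies outside the disc of radius `√2 η`. In polar coordinates, followed by the
substitution `s = r²`, the Gaussian integrals over discs and their complements are explicit.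
-/

open MeasureTheory Real Set

section Radial

variable {E : Type*} [NormedAddCommGroup E] [NormedSpace ℝ E]

theorem integral_comp_sq_add_sq (f : ℝ → E) :
    ∫ p : ℝ × ℝ, f (p.1 ^ 2 + p.2 ^ 2) = π • ∫ s in Ioi 0, f s := by
  have hpolar :
      ∫ p : ℝ × ℝ, f (p.1 ^ 2 + p.2 ^ 2) = (2 * π) • ∫ r in Ioi 0, r • f (r ^ 2) := by
    rw [← integral_comp_polarCoord_symm, polarCoord_target]
    have hradial : EqOn
        (fun p : ℝ × ℝ ↦ p.1 • f ((polarCoord.symm p).1 ^ 2 + (polarCoord.symm p).2 ^ 2))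
        (fun p ↦ p.1 • f (p.1 ^ 2)) (Ioi 0 ×ˢ Ioo (-π) π) := by
      rintro ⟨r, θ⟩ -
      have : (r * cos θ) ^ 2 + (r * sin θ) ^ 2 = r ^ 2 := by
        linear_combination r ^ 2 * sin_sq_add_cos_sq θ
      simp only [polarCoord_symm_apply, this]
    rw [setIntegral_congr_fun (measurableSet_Ioi.prod measurableSet_Ioo) hradial,
      Measure.volume_eq_prod, ← Measure.prod_restrict, integral_fun_fst (fun r ↦ r • f (r ^ 2)),
      measureReal_restrict_apply_univ,
      volume_real_Ioo_of_le (by linarith [pi_nonneg])]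
    ring_nf
  have hsubst := integral_comp_rpow_Ioi f (p := 2) two_ne_zero
  norm_num [rpow_two] at hsubst
  simp_rw [hpolar, ← hsubst, mul_smul, integral_smul, smul_smul]
  ring_nf

theorem setIntegral_comp_sq_add_sq {T : Set ℝ} (hT : MeasurableSet T) (f : ℝ → E) :
    ∫ p in {p : ℝ × ℝ | p.1 ^ 2 + p.2 ^ 2 ∈ T}, f (p.1 ^ 2 + p.2 ^ 2)
      = π • ∫ s in Ioi 0 ∩ T, f s := by
  have hS : MeasurableSet {p : ℝ × ℝ | p.1 ^ 2 + p.2 ^ 2 ∈ T} :=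
    (by fun_prop : Measurable fun p : ℝ × ℝ ↦ p.1 ^ 2 + p.2 ^ 2) hT
  rw [← integral_indicator hS, ← setIntegral_indicator hT]
  exact integral_comp_sq_add_sq (T.indicator f)

end Radial

section Gaussian

variable {b : ℝ}

theorem setIntegral_exp_neg_mul_sq_add_sq_lt (hb : 0 < b) {c : ℝ} (hc : 0 ≤ c) :
    ∫ p in {p : ℝ × ℝ | p.1 ^ 2 + p.2 ^ 2 < c}, exp (-b * (p.1 ^ 2 + p.2 ^ 2))
      = π / b * (1 - exp (-b * c)) := by
  have hb' : -b < 0 := neg_neg_of_pos hb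
  rw [show {p : ℝ × ℝ | p.1 ^ 2 + p.2 ^ 2 < c} = {p | p.1 ^ 2 + p.2 ^ 2 ∈ Iio c} from rfl,
    setIntegral_comp_sq_add_sq measurableSet_Iio (fun s ↦ exp (-b * s)),
    Ioi_inter_Iio, ← integral_Ioc_eq_integral_Ioo, ← intervalIntegral.integral_of_le hc,
    ← intervalIntegral.integral_Ioi_sub_Ioi (integrableOn_exp_mul_Ioi hb' 0) hc,
    integral_exp_mul_Ioi hb', integral_exp_mul_Ioi hb', smul_eq_mul, mul_zero, exp_zero]
  field_simp

theorem setIntegral_exp_neg_mul_sq_add_sq_gt (hb : 0 < b) {c : ℝ} (hc : 0 ≤ c) :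
    ∫ p in {p : ℝ × ℝ | c < p.1 ^ 2 + p.2 ^ 2}, exp (-b * (p.1 ^ 2 + p.2 ^ 2))
      = π / b * exp (-b * c) := by
  rw [show {p : ℝ × ℝ | c < p.1 ^ 2 + p.2 ^ 2} = {p | p.1 ^ 2 + p.2 ^ 2 ∈ Ioi c} from rfl,
    setIntegral_comp_sq_add_sq measurableSet_Ioi (fun s ↦ exp (-b * s)),
    Ioi_inter_Ioi, sup_eq_right.2 hc, integral_exp_mul_Ioi (neg_neg_of_pos hb), smul_eq_mul]
  field_simp

theorem sq_setIntegral_exp_neg_mul_sq (s : Set ℝ) :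
    (∫ x in s, exp (-b * x ^ 2)) ^ 2 = ∫ p in s ×ˢ s, exp (-b * (p.1 ^ 2 + p.2 ^ 2)) := by
  rw [sq, Measure.volume_eq_prod, ← setIntegral_prod_mul]
  simp only [← exp_add, mul_add]

theorem setIntegral_exp_neg_mul_sq_add_sq_mono (hb : 0 < b) {s t : Set (ℝ × ℝ)}
    (hst : s ⊆ t) :
    ∫ p in s, exp (-b * (p.1 ^ 2 + p.2 ^ 2)) ≤ ∫ p in t, exp (-b * (p.1 ^ 2 + p.2 ^ 2)) := by
  have hint : Integrable (fun p : ℝ × ℝ ↦ exp (-b * (p.1 ^ 2 + p.2 ^ 2))) := by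
    simp only [mul_add, exp_add]
    exact (integrable_exp_neg_mul_sq hb).mul_prod (integrable_exp_neg_mul_sq hb)
  exact setIntegral_mono_set hint.integrableOn (.of_forall fun _ ↦ (exp_pos _).le)
    hst.eventuallyLE

theorem le_sq_setIntegral_abs_lt (hb : 0 < b) {η : ℝ} (hη : 0 ≤ η) :
    π / b * (1 - exp (-b * η ^ 2)) ≤ (∫ x in {x : ℝ | |x| < η}, exp (-b * x ^ 2)) ^ 2 := by
  rw [sq_setIntegral_exp_neg_mul_sq, ← setIntegral_exp_neg_mul_sq_add_sq_lt hb (sq_nonneg η)]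
  refine setIntegral_exp_neg_mul_sq_add_sq_mono hb fun p hp ↦ ⟨?_, ?_⟩ <;>
    simp only [mem_ofPred_eq] at hp ⊢ <;>
    exact abs_lt_of_sq_lt_sq (by nlinarith [sq_nonneg p.1, sq_nonneg p.2]) hη

theorem sq_setIntegral_abs_lt_le (hb : 0 < b) (η : ℝ) :
    (∫ x in {x : ℝ | |x| < η}, exp (-b * x ^ 2)) ^ 2
      ≤ π / b * (1 - exp (-b * (2 * η ^ 2))) := by
  rw [sq_setIntegral_exp_neg_mul_sq, ← setIntegral_exp_neg_mul_sq_add_sq_lt hb (by positivity)]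
  refine setIntegral_exp_neg_mul_sq_add_sq_mono hb fun p ⟨hx, hy⟩ ↦ ?_
  simp only [mem_ofPred_eq] at hx hy ⊢
  nlinarith [sq_lt_sq' (neg_lt_of_abs_lt hx) (lt_of_abs_lt hx),
    sq_lt_sq' (neg_lt_of_abs_lt hy) (lt_of_abs_lt hy)]

theorem sq_setIntegral_lt_abs_le (hb : 0 < b) {η : ℝ} (hη : 0 ≤ η) :
    (∫ x in {x : ℝ | η < |x|}, exp (-b * x ^ 2)) ^ 2 ≤ π / b * exp (-b * (2 * η ^ 2)) := by
  rw [sq_setIntegral_exp_neg_mul_sq, ← setIntegral_exp_neg_mul_sq_add_sq_gt hb (by positivity)]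
  refine setIntegral_exp_neg_mul_sq_add_sq_mono hb fun p ⟨hx, hy⟩ ↦ ?_
  simp only [mem_ofPred_eq] at hx hy ⊢
  nlinarith [sq_lt_sq' (by linarith) hx, sq_lt_sq' (by linarith) hy, sq_abs p.1, sq_abs p.2]

end Gaussian

theorem sqrt_pi_div_sq_div_two {a : ℝ} (ha : 0 < a) : √(π / (a ^ 2 / 2)) = √(2 * π) / a := by
  rw [show π / (a ^ 2 / 2) = 2 * π / a ^ 2 by ring, sqrt_div' _ (sq_nonneg a), sqrt_sq ha.le]

theorem gaussian_integral_estimates (a η : ℝ) (ha : 0 < a) (hη : 0 < η) :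
    (Real.sqrt (2 * π) / a * Real.sqrt (1 - Real.exp (-a ^ 2 * η ^ 2 / 2))
      ≤ ∫ x in {x : ℝ | |x| < η}, Real.exp (-a ^ 2 * x ^ 2 / 2)) ∧
    ((∫ x in {x : ℝ | |x| < η}, Real.exp (-a ^ 2 * x ^ 2 / 2))
      ≤ Real.sqrt (2 * π) / a * Real.sqrt (1 - Real.exp (-a ^ 2 * η ^ 2))) ∧
    ((∫ x in {x : ℝ | η < |x|}, Real.exp (-a ^ 2 * x ^ 2 / 2))
      ≤ Real.sqrt (2 * π) / a * Real.exp (-a ^ 2 * η ^ 2 / 2)) := by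
  have hb : 0 < a ^ 2 / 2 := by positivity
  have hexp (x : ℝ) : exp (-a ^ 2 * x ^ 2 / 2) = exp (-(a ^ 2 / 2) * x ^ 2) := by ring_nf
  have hdouble : -(a ^ 2 / 2) * (2 * η ^ 2) = -a ^ 2 * η ^ 2 := by ring
  have hhalf : exp (-(a ^ 2 / 2) * η ^ 2) = √(exp (-(a ^ 2 / 2) * (2 * η ^ 2))) := by
    rw [← exp_half]
    ring_nf
  simp only [hexp, ← sqrt_pi_div_sq_div_two ha, ← sqrt_mul (div_pos pi_pos hb).le]
  refine ⟨?_, ?_, ?_⟩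
  · exact sqrt_le_iff.2
      ⟨integral_nonneg fun _ ↦ (exp_pos _).le, le_sq_setIntegral_abs_lt hb hη.le⟩
  · rw [← hdouble]
    exact (le_abs_self _).trans (abs_le_sqrt (sq_setIntegral_abs_lt_le hb η))
  · rw [hhalf, ← sqrt_mul (div_pos pi_pos hb).le]
    exact (le_abs_self _).trans (abs_le_sqrt (sq_setIntegral_lt_abs_le hb hη.le))
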